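/- One-step contraction under Armijo line search with c_2 ≥ 1/2 (key lemma of Theorem 2). Let E be a finite-dimensional real inner product space, ℓ : E → ℝ differentiable, w, w* ∈ E, μ ≥ 0, and assume ℓ(w*) ≥ ℓ(w) + ⟨∇ℓ(w), w* − w⟩ + (μ/2)‖w* − w‖². Let η > 0 and c_2 ≥ 1/2, set w⁺ = w − η∇ℓ(w), and assume the Armijo condition ℓ(w⁺) ≤ ℓ(w) − c_2η‖∇ℓ(w)‖² as well as the interpolation inequalities ℓ(w*) ≤ ℓ(w) and ℓ(w*) ≤ ℓ(w⁺). Then ‖w⁺ − w*‖² ≤ (1 − μη)‖w − w*‖². -/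

import Mathlib

open scoped RealInnerProductSpace

/-! Expanding the square, `‖w⁺ − w*‖² = ‖w − w*‖² − 2η⟪∇ℓ(w), w − w*⟫ + η²‖∇ℓ(w)‖²`.
Strong convexity bounds the cross term by `ℓ(w) − ℓ(w*) + (μ/2)‖w − w*‖²`, while the Armijo
condition with `c₂ ≥ 1/2` together with `ℓ(w*) ≤ ℓ(w⁺)` gives `η‖∇ℓ(w)‖² ≤ 2(ℓ(w) − ℓ(w*))`,
so the function-value terms cancel and only the contraction factor `1 − μη` remains. -/

section GradientStep

variable {E : Type*} [NormedAddCommGroup E] [InnerProductSpace ℝ E]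

theorem norm_sub_smul_sub_sq (w v g : E) (η : ℝ) :
    ‖w - η • g - v‖ ^ 2 = ‖w - v‖ ^ 2 - 2 * η * ⟪g, w - v⟫ + η ^ 2 * ‖g‖ ^ 2 := by
  rw [sub_right_comm, norm_sub_sq_real, real_inner_smul_right, norm_smul, real_inner_comm,
    mul_pow, Real.norm_eq_abs, sq_abs]
  ring

theorem norm_sub_smul_sub_sq_le {w v g : E} {a b μ η : ℝ} (hη : 0 ≤ η)
    (hlower : b ≥ a + ⟪g, v - w⟫ + (μ / 2) * ‖v - w‖ ^ 2)
    (hstep : η * ‖g‖ ^ 2 ≤ 2 * (a - b)) :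
    ‖w - η • g - v‖ ^ 2 ≤ (1 - μ * η) * ‖w - v‖ ^ 2 := by
  have hcross : a - b + (μ / 2) * ‖w - v‖ ^ 2 ≤ ⟪g, w - v⟫ := by
    rw [← neg_sub, inner_neg_right, norm_neg] at hlower
    linarith
  calc ‖w - η • g - v‖ ^ 2
      = ‖w - v‖ ^ 2 - 2 * η * ⟪g, w - v⟫ + η * (η * ‖g‖ ^ 2) := by
        rw [norm_sub_smul_sub_sq]; ring
    _ ≤ ‖w - v‖ ^ 2 - 2 * η * (a - b + (μ / 2) * ‖w - v‖ ^ 2) + η * (2 * (a - b)) := by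
        gcongr
    _ = (1 - μ * η) * ‖w - v‖ ^ 2 := by ring

end GradientStep

theorem one_step_contraction_armijo_general
    {E : Type*} [NormedAddCommGroup E] [InnerProductSpace ℝ E] [FiniteDimensional ℝ E]
    (ℓ : E → ℝ)
    (w wstar : E) (μ : ℝ)
    (hsc : ℓ wstar ≥
      ℓ w + ⟪gradient ℓ w, wstar - w⟫ + (μ / 2) * ‖wstar - w‖ ^ 2)
    (η c₂ : ℝ) (hη : 0 < η) (hc₂ : (1 : ℝ) / 2 ≤ c₂)
    (harmijo : ℓ (w - η • gradient ℓ w) ≤ ℓ w - c₂ * η * ‖gradient ℓ w‖ ^ 2)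
    (hinterp' : ℓ wstar ≤ ℓ (w - η • gradient ℓ w)) :
    ‖(w - η • gradient ℓ w) - wstar‖ ^ 2 ≤ (1 - μ * η) * ‖w - wstar‖ ^ 2 := by
  have hstep : η * ‖gradient ℓ w‖ ^ 2 ≤ 2 * (ℓ w - ℓ wstar) := by
    have hslack : 0 ≤ (2 * c₂ - 1) * (η * ‖gradient ℓ w‖ ^ 2) :=
      mul_nonneg (by linarith) (by positivity)
    linarith
  exact norm_sub_smul_sub_sq_le hη.le hsc hstep

/-- **One-step contraction under Armijo line search with `c₂ ≥ 1/2` (key lemma of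
Theorem 2).** Under the strong convexity inequality at `(w, w*)`, the Armijo condition
with parameter `c₂ ≥ 1/2` for the step `w⁺ = w − η∇ℓ(w)`, and the interpolation
inequalities `ℓ(w*) ≤ ℓ(w)` and `ℓ(w*) ≤ ℓ(w⁺)`, one has
`‖w⁺ − w*‖² ≤ (1 − μη)‖w − w*‖²`. -/
theorem one_step_contraction_armijo
    {E : Type*} [NormedAddCommGroup E] [InnerProductSpace ℝ E] [FiniteDimensional ℝ E]
    (ℓ : E → ℝ) (hdiff : Differentiable ℝ ℓ)
    (w wstar : E) (μ : ℝ) (hμ : 0 ≤ μ)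
    (hsc : ℓ wstar ≥
      ℓ w + ⟪gradient ℓ w, wstar - w⟫ + (μ / 2) * ‖wstar - w‖ ^ 2)
    (η c₂ : ℝ) (hη : 0 < η) (hc₂ : (1 : ℝ) / 2 ≤ c₂)
    (harmijo : ℓ (w - η • gradient ℓ w) ≤ ℓ w - c₂ * η * ‖gradient ℓ w‖ ^ 2)
    (hinterp : ℓ wstar ≤ ℓ w)
    (hinterp' : ℓ wstar ≤ ℓ (w - η • gradient ℓ w)) :
    ‖(w - η • gradient ℓ w) - wstar‖ ^ 2 ≤ (1 - μ * η) * ‖w - wstar‖ ^ 2 :=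
  one_step_contraction_armijo_general ℓ w wstar μ hsc η c₂ hη hc₂ harmijo hinterp'
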